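/- Let μ be a nonatomic σ-finite Borel measure on a Polish space, and let f, g ∈ L₁(μ) with ∫|f| dμ > 0. Suppose that (∫ hf dμ)·(∫ hg dμ) ≥ 0 for every measurable function h with |h| = 1 almost everywhere. Then there is a nonnegative constant c such that g = c·f almost everywhere. -/

import Mathlib

open MeasureTheory Set Filter Topology

noncomputable section

private lemma aux_pos {Ω : Type*} [MeasurableSpace Ω] (μ : Measure Ω)
    {F : Ω → ℝ} {D : Set Ω} (hD : MeasurableSet D) (hFi : IntegrableOn F D μ)
    (hFpos : ∀ ω ∈ D, 0 < F ω) (hμD : μ D ≠ 0) : 0 < ∫ ω in D, F ω ∂μ := by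
  rw [integral_pos_iff_support_of_nonneg_ae
    ((ae_restrict_iff' hD).2 (Eventually.of_forall fun ω hω => (hFpos ω hω).le)) hFi]
  have hsub : D ⊆ Function.support F := fun ω hω => (hFpos ω hω).ne'
  have : μ.restrict D (Function.support F) = μ D := by
    rw [Measure.restrict_apply' hD, Set.inter_eq_self_of_subset_right hsub]
  rw [this]
  exact hμD.bot_lt

private lemma aux_sier {Ω : Type*} [TopologicalSpace Ω] [PolishSpace Ω] [MeasurableSpace Ω]
    [BorelSpace Ω] (μ : Measure Ω) [NullSingletonClass μ] {F : Ω → ℝ}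
    (hFi : Integrable F μ) (hFnn : ∀ ω, 0 ≤ F ω) {s : Set Ω} (hs : MeasurableSet s)
    {r : ℝ} (hr0 : 0 ≤ r) (hrs : r ≤ ∫ ω in s, F ω ∂μ) :
    ∃ t, MeasurableSet t ∧ t ⊆ s ∧ ∫ ω in t, F ω ∂μ = r := by
  rcases eq_or_lt_of_le hr0 with h0 | hrpos
  · exact ⟨∅, MeasurableSet.empty, empty_subset s, by simp [← h0]⟩
  rcases eq_or_lt_of_le hrs with hteq | hrlt
  · exact ⟨s, hs, subset_rfl, hteq.symm⟩
  obtain ⟨φ, hφ⟩ := exists_measurableEmbedding_real Ω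
  set A : ℝ → Set Ω := fun t => s ∩ φ ⁻¹' (Iic t) with hA
  have hAm : ∀ t, MeasurableSet (A t) := fun t => hs.inter (hφ.measurable measurableSet_Iic)
  have hAmono : ∀ {t t' : ℝ}, t ≤ t' → A t ⊆ A t' := fun h =>
    inter_subset_inter_right _ (preimage_mono (Iic_subset_Iic.mpr h))
  set G : ℝ → ℝ := fun t => ∫ ω in A t, F ω ∂μ with hG
  have hInt : ∀ (B : Set Ω), IntegrableOn F B μ := fun B => hFi.integrableOn
  have hGmono : ∀ {t t' : ℝ}, t ≤ t' → G t ≤ G t' := fun h =>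
    setIntegral_mono_set (hInt _) (Eventually.of_forall hFnn) ((hAmono h).eventuallyLE)
  have hdiv : ∀ {i j : ℕ}, i ≤ j → (1 : ℝ) / (j + 1) ≤ 1 / (i + 1) := by
    intro i j hij
    apply one_div_le_one_div_of_le (by positivity)
    exact_mod_cast add_le_add_left (Nat.cast_le.2 hij) 1
  have htop : Tendsto (fun n : ℕ => G n) atTop (𝓝 (∫ ω in s, F ω ∂μ)) := by
    have hU : ⋃ n : ℕ, A n = s := by
      apply Subset.antisymm (iUnion_subset fun n => inter_subset_left)
      intro ω hω
      obtain ⟨n, hn⟩ := exists_nat_ge (φ ω)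
      exact mem_iUnion.2 ⟨n, hω, hn⟩
    have := tendsto_setIntegral_of_monotone (fun n : ℕ => hAm n)
      (fun i j hij => hAmono (by exact_mod_cast hij)) (hU ▸ hInt s)
    rwa [hU] at this
  have hbot : Tendsto (fun n : ℕ => G (-n)) atTop (𝓝 0) := by
    have hI : ⋂ n : ℕ, A (-(n : ℝ)) = ∅ := by
      apply eq_empty_iff_forall_notMem.2
      intro ω hω
      obtain ⟨n, hn⟩ := exists_nat_gt (-(φ ω))
      have := (mem_iInter.1 hω n).2
      simp only [mem_preimage, mem_Iic] at this
      linarith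
    have := tendsto_setIntegral_of_antitone (fun n : ℕ => hAm (-n))
      (fun i j hij => hAmono (neg_le_neg (by exact_mod_cast hij))) ⟨0, hInt _⟩
    rwa [hI, Measure.restrict_empty, integral_zero_measure] at this
  set S := {t : ℝ | r ≤ G t} with hS
  have hSup : ∀ {t t' : ℝ}, t ∈ S → t ≤ t' → t' ∈ S := fun ht h => le_trans ht (hGmono h)
  have hSne : S.Nonempty := by
    obtain ⟨n, hn⟩ := (htop.eventually (eventually_ge_nhds hrlt)).exists
    exact ⟨n, hn⟩
  have hSbdd : BddBelow S := by
    obtain ⟨n, hn⟩ := (hbot.eventually (eventually_lt_nhds hrpos)).exists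
    refine ⟨-n, fun t ht => ?_⟩
    by_contra hlt
    push_neg at hlt
    exact absurd (le_trans ht (hGmono hlt.le)) (not_le.2 hn)
  set t₀ := sInf S with ht₀
  have hub : ∀ t, t₀ < t → r ≤ G t := by
    intro t ht
    obtain ⟨u, huS, hut⟩ := (csInf_lt_iff hSbdd hSne).1 ht
    exact hSup huS hut.le
  have hlb : ∀ t, t < t₀ → G t < r := by
    intro t ht
    by_contra hge
    push_neg at hge
    exact absurd (csInf_le hSbdd hge) (not_le.2 ht)
  have hnull : μ (φ ⁻¹' {t₀}) = 0 := by
    apply Set.Subsingleton.measure_zero _ μ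
    intro a ha b hb
    exact hφ.injective (by rw [mem_preimage, mem_singleton_iff] at ha hb; rw [ha, hb])
  have hupper_lim : r ≤ G t₀ := by
    have hIm : ⋂ n : ℕ, A (t₀ + 1/(n+1)) = A t₀ := by
      apply Subset.antisymm
      · intro ω hω
        have hmem := fun n : ℕ => mem_iInter.1 hω n
        refine ⟨(hmem 0).1, ?_⟩
        simp only [mem_preimage, mem_Iic]
        by_contra hgt
        push_neg at hgt
        obtain ⟨n, hn⟩ := exists_nat_one_div_lt (sub_pos.2 hgt)
        have := (hmem n).2
        simp only [mem_preimage, mem_Iic] at this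
        linarith
      · intro ω hω
        exact mem_iInter.2 fun n => hAmono (le_add_of_nonneg_right (by positivity)) hω
    have hanti := tendsto_setIntegral_of_antitone (fun n : ℕ => hAm _)
      (fun i j hij => hAmono (add_le_add_right (hdiv hij) t₀)) ⟨0, hInt _⟩
    rw [hIm] at hanti
    refine ge_of_tendsto hanti (Eventually.of_forall fun n => hub _ ?_)
    exact lt_add_of_pos_right _ (by positivity)
  have hlower_lim : G t₀ ≤ r := by
    have hUm : ⋃ n : ℕ, A (t₀ - 1/(n+1)) = s ∩ φ ⁻¹' (Iio t₀) := by
      apply Subset.antisymm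
      · refine iUnion_subset fun n ω hω => ?_
        have h2 : φ ω ≤ t₀ - 1/(n+1) := hω.2
        refine ⟨hω.1, ?_⟩
        show φ ω < t₀
        have hp : (0:ℝ) < 1/(n+1) := by positivity
        linarith
      · rintro ω ⟨h1, h2⟩
        have h2' : φ ω < t₀ := h2
        obtain ⟨n, hn⟩ := exists_nat_one_div_lt (sub_pos.2 h2')
        refine mem_iUnion.2 ⟨n, h1, ?_⟩
        show φ ω ≤ t₀ - 1/(n+1)
        linarith
    have hmono' : Monotone fun n : ℕ => A (t₀ - 1/(n+1)) :=
      fun i j hij => hAmono (sub_le_sub_left (hdiv hij) t₀)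
    have hlim := tendsto_setIntegral_of_monotone (fun n : ℕ => hAm _) hmono' (hInt _)
    rw [hUm] at hlim
    have hae : (s ∩ φ ⁻¹' (Iio t₀) : Set Ω) =ᵐ[μ] (A t₀ : Set Ω) := by
      have h1 : ∀ᵐ ω ∂μ, ω ∉ φ ⁻¹' {t₀} := measure_eq_zero_iff_ae_notMem.1 hnull
      filter_upwards [h1] with ω hω
      have hne : φ ω ≠ t₀ := by simpa using hω
      show (ω ∈ s ∩ φ ⁻¹' (Iio t₀)) = (ω ∈ A t₀)
      simp only [hA, mem_inter_iff, mem_preimage, mem_Iio, mem_Iic, eq_iff_iff]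
      exact and_congr_right fun _ => ⟨le_of_lt, fun hle => hle.lt_of_ne hne⟩
    rw [setIntegral_congr_set hae] at hlim
    refine le_of_tendsto hlim (Eventually.of_forall fun n => (hlb _ ?_).le)
    exact sub_lt_self _ (by positivity)
  exact ⟨A t₀, hAm t₀, inter_subset_left, le_antisymm hlower_lim hupper_lim⟩

private def flipSet {Ω : Type*} (D : Set Ω) (p : Ω → ℝ) : Ω → ℝ :=
  fun ω => (1 - 2 * D.indicator (fun _ => (1:ℝ)) ω) * p ω

private lemma flip_measurable {Ω : Type*} [MeasurableSpace Ω] {D : Set Ω} {p : Ω → ℝ}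
    (hD : MeasurableSet D) (hp : Measurable p) : Measurable (flipSet D p) :=
  ((measurable_const.sub ((measurable_const.indicator hD).const_mul 2)).mul hp)

private lemma flip_abs {Ω : Type*} {D : Set Ω} {p : Ω → ℝ} (hp1 : ∀ ω, |p ω| = 1) :
    ∀ ω, |flipSet D p ω| = 1 := by
  intro ω
  by_cases hω : ω ∈ D <;> simp [flipSet, Set.indicator, hω, abs_mul, hp1 ω] <;> norm_num

private lemma flip_integral {Ω : Type*} [MeasurableSpace Ω] {μ : Measure Ω}
    {p F : Ω → ℝ} {D : Set Ω} (hD : MeasurableSet D)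
    (hpF : Integrable (fun ω => p ω * F ω) μ) :
    ∫ ω, flipSet D p ω * F ω ∂μ
      = ∫ ω, p ω * F ω ∂μ - 2 * ∫ ω in D, p ω * F ω ∂μ := by
  have hid : (fun ω => flipSet D p ω * F ω)
      = fun ω => p ω * F ω - 2 * D.indicator (fun ω => p ω * F ω) ω := by
    funext ω
    by_cases hω : ω ∈ D <;> simp [flipSet, Set.indicator, hω] <;> ring
  rw [hid, integral_sub hpF ((hpF.indicator hD).const_mul 2), integral_const_mul,
    integral_indicator hD]

/-- Let `μ` be a nonatomic σ-finite Borel measure on a Polish space and `f, g ∈ L₁(μ)`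
with `∫ |f| dμ > 0`. If `(∫ hf dμ)·(∫ hg dμ) ≥ 0` for every measurable `h` with `|h| = 1`
a.e., then `g = c·f` a.e. for some constant `c ≥ 0`. -/
theorem stmt8 {Ω : Type*} [TopologicalSpace Ω] [PolishSpace Ω]
    [MeasurableSpace Ω] [BorelSpace Ω] (μ : Measure Ω) [SigmaFinite μ] [NullSingletonClass μ]
    (f g : Ω → ℝ) (hf : Integrable f μ) (hg : Integrable g μ)
    (hf0 : 0 < ∫ ω, |f ω| ∂μ)
    (h : ∀ h : Ω → ℝ, Measurable h → (∀ᵐ ω ∂μ, |h ω| = 1) →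
      0 ≤ (∫ ω, h ω * f ω ∂μ) * ∫ ω, h ω * g ω ∂μ) :
    ∃ c : ℝ, 0 ≤ c ∧ g =ᵐ[μ] fun ω => c * f ω := by
  classical
  obtain ⟨f', hf'm, hff'⟩ : ∃ f' : Ω → ℝ, Measurable f' ∧ f =ᵐ[μ] f' :=
    ⟨_, hf.aemeasurable.measurable_mk, hf.aemeasurable.ae_eq_mk⟩
  obtain ⟨g', hg'm, hgg'⟩ : ∃ g' : Ω → ℝ, Measurable g' ∧ g =ᵐ[μ] g' :=
    ⟨_, hg.aemeasurable.measurable_mk, hg.aemeasurable.ae_eq_mk⟩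
  have hf'i : Integrable f' μ := hf.congr hff'
  have hg'i : Integrable g' μ := hg.congr hgg'
  set M := ∫ ω, |f' ω| ∂μ with hMdef
  have hMeq : ∫ ω, |f ω| ∂μ = M := integral_congr_ae (hff'.mono fun ω hω => by simp [hω])
  have hM : 0 < M := by linarith [hf0, hMeq]
  have hMne : M ≠ 0 := ne_of_gt hM
  have hpat : ∀ (p : Ω → ℝ), Measurable p → (∀ ω, |p ω| = 1) → ∀ {F : Ω → ℝ},
      Integrable F μ → Integrable (fun ω => p ω * F ω) μ := by
    intro p hpm hp1 F hF
    exact hF.bdd_mul hpm.aestronglyMeasurable (c := 1) (Eventually.of_forall fun ω => by rw [Real.norm_eq_abs, hp1 ω])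
  have H : ∀ (p : Ω → ℝ), Measurable p → (∀ ω, |p ω| = 1) →
      0 ≤ (∫ ω, p ω * f' ω ∂μ) * ∫ ω, p ω * g' ω ∂μ := by
    intro p hpm hp1
    have e1 : ∫ ω, p ω * f ω ∂μ = ∫ ω, p ω * f' ω ∂μ :=
      integral_congr_ae (hff'.mono fun ω hω => by simp [hω])
    have e2 : ∫ ω, p ω * g ω ∂μ = ∫ ω, p ω * g' ω ∂μ :=
      integral_congr_ae (hgg'.mono fun ω hω => by simp [hω])
    rw [← e1, ← e2]
    exact h p hpm (Eventually.of_forall hp1)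
  have hFi2 : Integrable (fun ω => |f' ω| + |g' ω|) μ := hf'i.abs.add hg'i.abs
  -- Key step: any sign pattern annihilating f' also annihilates g'
  have KM0 : ∀ (p : Ω → ℝ), Measurable p → (∀ ω, |p ω| = 1) →
      (∫ ω, p ω * f' ω ∂μ) = 0 → (∫ ω, p ω * g' ω ∂μ) ≤ 0 := by
    intro p hpm hp1 hx
    by_contra hdc
    push_neg at hdc
    set d := ∫ ω, p ω * g' ω ∂μ with hddef
    set A := {ω | 0 < p ω * f' ω} with hAdef
    have hAm : MeasurableSet A := measurableSet_lt measurable_const (hpm.mul hf'm)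
    have hpfA : ∀ ω ∈ A, p ω * f' ω = |f' ω| := by
      intro ω hω
      have hpos : 0 < p ω * f' ω := hω
      have habs : |p ω * f' ω| = |f' ω| := by rw [abs_mul, hp1 ω, one_mul]
      rw [← habs, abs_of_pos hpos]
    have hpfAc : ∀ ω ∉ A, p ω * f' ω = -|f' ω| := by
      intro ω hω
      have hle : p ω * f' ω ≤ 0 := not_lt.1 hω
      have habs : |p ω * f' ω| = |f' ω| := by rw [abs_mul, hp1 ω, one_mul]
      rw [← habs, abs_of_nonpos hle, neg_neg]
    have hintpf : Integrable (fun ω => p ω * f' ω) μ := hpat p hpm hp1 hf'i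
    have hintpg : Integrable (fun ω => p ω * g' ω) μ := hpat p hpm hp1 hg'i
    have hAhalf : ∫ ω in A, |f' ω| ∂μ = M / 2 := by
      have e1 : ∫ ω in A, p ω * f' ω ∂μ = ∫ ω in A, |f' ω| ∂μ :=
        setIntegral_congr_fun hAm fun ω hω => hpfA ω hω
      have e2 : ∫ ω in Aᶜ, p ω * f' ω ∂μ = ∫ ω in Aᶜ, -|f' ω| ∂μ :=
        setIntegral_congr_fun hAm.compl fun ω hω => hpfAc ω hω
      have e3 := integral_add_compl hAm hintpf
      have e4 := integral_add_compl hAm hf'i.abs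
      have e5 : ∫ ω in Aᶜ, -|f' ω| ∂μ = - ∫ ω in Aᶜ, |f' ω| ∂μ := integral_neg _
      rw [hx] at e3
      rw [e1, e2, e5] at e3
      rw [← hMdef] at e4
      linarith
    set m := ∫ ω in A, (|f' ω| + |g' ω|) ∂μ with hmdef
    have hm : M/2 ≤ m := by
      rw [← hAhalf]
      exact setIntegral_mono hf'i.abs.integrableOn hFi2.integrableOn
        (fun ω => le_add_of_nonneg_right (abs_nonneg _))
    have hεpos : 0 < min (d/4) m := lt_min (by linarith) (by linarith)
    obtain ⟨D, hDm, hDA, hDval⟩ := aux_sier μ hFi2 (fun ω => by positivity) hAm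
      hεpos.le (min_le_right _ _)
    have hμD : μ D ≠ 0 := by
      intro h0
      have hz : ∫ ω in D, (|f' ω| + |g' ω|) ∂μ = 0 := by
        rw [Measure.restrict_eq_zero.2 h0]
        exact integral_zero_measure _
      rw [hz] at hDval
      linarith
    have hDpos : 0 < ∫ ω in D, p ω * f' ω ∂μ :=
      aux_pos μ hDm hintpf.integrableOn (fun ω hω => hDA hω) hμD
    have hqm : Measurable (flipSet D p) := flip_measurable hDm hpm
    have hq1 : ∀ ω, |flipSet D p ω| = 1 := flip_abs hp1
    have hxq : ∫ ω, flipSet D p ω * f' ω ∂μ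
        = 0 - 2 * ∫ ω in D, p ω * f' ω ∂μ := by
      rw [flip_integral hDm hintpf, hx]
    have hyq : ∫ ω, flipSet D p ω * g' ω ∂μ
        = d - 2 * ∫ ω in D, p ω * g' ω ∂μ := flip_integral hDm hintpg
    have hprod := H _ hqm hq1
    have hxneg : ∫ ω, flipSet D p ω * f' ω ∂μ < 0 := by rw [hxq]; linarith
    have hynp : ∫ ω, flipSet D p ω * g' ω ∂μ ≤ 0 := by
      by_contra hpos
      push_neg at hpos
      exact absurd hprod (not_le.2 (mul_neg_of_neg_of_pos hxneg hpos))
    have h1 : ∫ ω in D, p ω * g' ω ∂μ ≤ ∫ ω in D, |g' ω| ∂μ :=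
      setIntegral_mono hintpg.integrableOn hg'i.abs.integrableOn
        (fun ω => (le_abs_self _).trans (le_of_eq (by rw [abs_mul, hp1 ω, one_mul])))
    have h2 : ∫ ω in D, |g' ω| ∂μ ≤ min (d/4) m := by
      rw [← hDval]
      exact setIntegral_mono hg'i.abs.integrableOn hFi2.integrableOn
        (fun ω => le_add_of_nonneg_left (abs_nonneg _))
    rw [hyq] at hynp
    have h3 := min_le_left (d/4) m
    linarith
  have KM : ∀ (p : Ω → ℝ), Measurable p → (∀ ω, |p ω| = 1) →
      (∫ ω, p ω * f' ω ∂μ) = 0 → (∫ ω, p ω * g' ω ∂μ) = 0 := by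
    intro p hpm hp1 hx
    have h1 := KM0 p hpm hp1 hx
    have hneg1 : ∫ ω, (fun ω => -p ω) ω * f' ω ∂μ = 0 := by
      simp only [neg_mul]
      rw [integral_neg, hx, neg_zero]
    have h2 := KM0 (fun ω => -p ω) hpm.neg (fun ω => by rw [abs_neg, hp1 ω]) hneg1
    have h3 : ∫ ω, (fun ω => -p ω) ω * g' ω ∂μ = - ∫ ω, p ω * g' ω ∂μ := by
      simp only [neg_mul]
      exact integral_neg _
    rw [h3] at h2
    linarith
  -- the sign of f' and the set where f' is nonzero
  set W := {ω | f' ω ≠ 0} with hWdef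
  have hWm : MeasurableSet W := (hf'm (measurableSet_singleton 0)).compl
  set σ : Ω → ℝ := fun ω => if f' ω < 0 then -1 else 1 with hσdef
  have hσm : Measurable σ :=
    Measurable.ite (measurableSet_lt hf'm measurable_const) measurable_const measurable_const
  have hσ1 : ∀ ω, |σ ω| = 1 := fun ω => by
    by_cases hc : f' ω < 0 <;> simp [hσdef, hc]
  have hσf : (fun ω => σ ω * f' ω) = fun ω => |f' ω| := by
    funext ω
    rcases lt_or_ge (f' ω) 0 with hc | hc
    · simp [hσdef, hc, abs_of_neg hc]
    · simp [hσdef, not_lt.2 hc, abs_of_nonneg hc]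
  have hintσg : Integrable (fun ω => σ ω * g' ω) μ := hpat σ hσm hσ1 hg'i
  have hintσf : Integrable (fun ω => σ ω * f' ω) μ := hpat σ hσm hσ1 hf'i
  have hMσ : ∫ ω, σ ω * f' ω ∂μ = M := by
    rw [hσf]
  have hWint : ∫ ω in W, |f' ω| ∂μ = M := by
    have hzero : ∫ ω in Wᶜ, |f' ω| ∂μ = 0 := by
      have he : EqOn (fun ω => |f' ω|) (fun _ => (0:ℝ)) Wᶜ := fun ω hω => by
        have h0 : f' ω = 0 := not_not.1 hω
        simp [h0]
      rw [setIntegral_congr_fun hWm.compl he, integral_zero]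
    have hadd := integral_add_compl hWm hf'i.abs
    rw [← hMdef] at hadd
    linarith
  have hsplit : ∀ (F : Ω → ℝ), Integrable F μ → ∀ E, MeasurableSet E → E ⊆ W →
      ∫ ω in E, F ω ∂μ + ∫ ω in W \ E, F ω ∂μ = ∫ ω in W, F ω ∂μ := by
    intro F hF E hEm hEW
    rw [← setIntegral_union disjoint_sdiff_self_right (hWm.diff hEm)
      hF.integrableOn hF.integrableOn, union_diff_cancel hEW]
  have hτf : ∀ E, MeasurableSet E → E ⊆ W → ∫ ω in E, |f' ω| ∂μ = M/2 →
      ∫ ω, flipSet (W \ E) σ ω * f' ω ∂μ = 0 := by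
    intro E hEm hEW hEv
    rw [flip_integral (hWm.diff hEm) hintσf, hMσ]
    have h1 : ∫ ω in W \ E, σ ω * f' ω ∂μ = ∫ ω in W \ E, |f' ω| ∂μ := by rw [hσf]
    have h2 := hsplit (fun ω => |f' ω|) hf'i.abs E hEm hEW
    rw [h1]
    linarith [h2, hEv, hWint]
  obtain ⟨E₀, hE₀m, hE₀W, hE₀v⟩ := aux_sier (μ := μ) (F := fun ω => |f' ω|) hf'i.abs
    (fun ω => abs_nonneg _) hWm (r := M/2) (by linarith) (by rw [hWint]; linarith)
  set τ : Ω → ℝ := flipSet (W \ E₀) σ with hτdef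
  have hτm : Measurable τ := flip_measurable (hWm.diff hE₀m) hσm
  have hτ1 : ∀ ω, |τ ω| = 1 := flip_abs hσ1
  have hτf0 : ∫ ω, τ ω * f' ω ∂μ = 0 := hτf E₀ hE₀m hE₀W hE₀v
  have hσZ : ∀ ω, f' ω = 0 → σ ω = 1 := by
    intro ω hω
    simp [hσdef, hω, lt_irrefl]
  have hτZ : ∀ ω, f' ω = 0 → τ ω = 1 := by
    intro ω hω
    have h1 : ω ∉ W \ E₀ := fun hc => hc.1 hω
    simp [hτdef, flipSet, indicator_of_notMem h1, hσZ ω hω]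
  have hZ : ∀ A, MeasurableSet A → A ⊆ Wᶜ → ∫ ω in A, g' ω ∂μ = 0 := by
    intro A hAm hAW
    have hZf' : ∀ ω ∈ A, f' ω = 0 := fun ω hω => not_not.1 (hAW hω)
    have hqf : ∫ ω, flipSet A τ ω * f' ω ∂μ = 0 := by
      rw [flip_integral hAm (hpat τ hτm hτ1 hf'i), hτf0]
      have he : EqOn (fun ω => τ ω * f' ω) (fun _ => (0:ℝ)) A := fun ω hω => by
        simp [hZf' ω hω]
      rw [setIntegral_congr_fun hAm he, integral_zero]
      ring
    have hqg := KM _ (flip_measurable hAm hτm) (flip_abs hτ1) hqf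
    have hτg0 := KM τ hτm hτ1 hτf0
    rw [flip_integral hAm (hpat τ hτm hτ1 hg'i), hτg0] at hqg
    have heq : ∫ ω in A, τ ω * g' ω ∂μ = ∫ ω in A, g' ω ∂μ :=
      setIntegral_congr_fun hAm fun ω hω => by rw [hτZ ω (hZf' ω hω), one_mul]
    rw [heq] at hqg
    linarith
  have hZae : ∀ᵐ ω ∂μ, ω ∈ Wᶜ → g' ω = 0 := by
    set A1 := Wᶜ ∩ {ω | 0 < g' ω} with hA1
    set A2 := Wᶜ ∩ {ω | g' ω < 0} with hA2
    have hA1m : MeasurableSet A1 := hWm.compl.inter (measurableSet_lt measurable_const hg'm)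
    have hA2m : MeasurableSet A2 := hWm.compl.inter (measurableSet_lt hg'm measurable_const)
    have h1 : μ A1 = 0 := by
      by_contra h0
      have hpos := aux_pos μ hA1m hg'i.integrableOn (fun ω hω => hω.2) h0
      exact absurd (hZ A1 hA1m inter_subset_left) (ne_of_gt hpos)
    have h2 : μ A2 = 0 := by
      by_contra h0
      have hneg : 0 < ∫ ω in A2, -g' ω ∂μ :=
        aux_pos μ hA2m hg'i.neg.integrableOn (fun ω hω => neg_pos.2 hω.2) h0
      rw [integral_neg] at hneg
      have := hZ A2 hA2m inter_subset_left
      linarith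
    have h3 : μ (A1 ∪ A2) = 0 := measure_union_null h1 h2
    filter_upwards [measure_eq_zero_iff_ae_notMem.1 h3] with ω hω hωW
    by_contra hne
    rcases lt_or_gt_of_ne hne with hlt | hgt
    · exact hω (Or.inr ⟨hωW, hlt⟩)
    · exact hω (Or.inl ⟨hωW, hgt⟩)
  set y₀ := ∫ ω in W, σ ω * g' ω ∂μ with hy₀def
  have hσg_total : ∫ ω, σ ω * g' ω ∂μ = y₀ := by
    have hadd := integral_add_compl hWm hintσg
    have hc : ∫ ω in Wᶜ, σ ω * g' ω ∂μ = 0 := by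
      have heq : ∫ ω in Wᶜ, σ ω * g' ω ∂μ = ∫ ω in Wᶜ, g' ω ∂μ :=
        setIntegral_congr_fun hWm.compl fun ω hω => by
          rw [hσZ ω (not_not.1 hω), one_mul]
      rw [heq, hZ Wᶜ hWm.compl subset_rfl]
    linarith
  have KB : ∀ E, MeasurableSet E → E ⊆ W → ∫ ω in E, |f' ω| ∂μ = M/2 →
      ∫ ω in E, σ ω * g' ω ∂μ = y₀ / 2 := by
    intro E hEm hEW hEv
    have hτg := KM _ (flip_measurable (hWm.diff hEm) hσm) (flip_abs hσ1)
      (hτf E hEm hEW hEv)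
    rw [flip_integral (hWm.diff hEm) hintσg, hσg_total] at hτg
    have h2 := hsplit (fun ω => σ ω * g' ω) hintσg E hEm hEW
    linarith [hτg, h2]
  have hy₀nn : 0 ≤ y₀ := by
    have hprod := H σ hσm hσ1
    rw [hMσ, hσg_total] at hprod
    nlinarith
  set c := y₀ / M with hcdef
  have hc0 : 0 ≤ c := div_nonneg hy₀nn hM.le
  set ψ : Ω → ℝ := fun ω => W.indicator (fun ω => σ ω * g' ω) ω - c * |f' ω| with hψdef
  have hψi : Integrable ψ μ := (hintσg.indicator hWm).sub (hf'i.abs.const_mul c)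
  have hψtot : ∫ ω, ψ ω ∂μ = 0 := by
    have : ∫ ω, ψ ω ∂μ = (∫ ω, W.indicator (fun ω => σ ω * g' ω) ω ∂μ)
        - ∫ ω, c * |f' ω| ∂μ :=
      integral_sub (hintσg.indicator hWm) (hf'i.abs.const_mul c)
    rw [this, integral_indicator hWm, integral_const_mul, ← hMdef, ← hy₀def, hcdef]
    field_simp
    ring
  have hψZ : ∀ ω, ω ∉ W → ψ ω = 0 := by
    intro ω hω
    have h0 : f' ω = 0 := not_not.1 hω
    simp [hψdef, indicator_of_notMem hω, h0]
  have hψW : ∀ ω ∈ W, ψ ω = σ ω * g' ω - c * |f' ω| := fun ω hω => by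
    simp [hψdef, indicator_of_mem hω]
  have hEψ : ∀ E, MeasurableSet E → E ⊆ W → ∫ ω in E, |f' ω| ∂μ = M/2 →
      ∫ ω in E, ψ ω ∂μ = 0 := by
    intro E hEm hEW hEv
    have h1 : ∫ ω in E, ψ ω ∂μ = (∫ ω in E, W.indicator (fun ω => σ ω * g' ω) ω ∂μ)
        - ∫ ω in E, c * |f' ω| ∂μ :=
      integral_sub (hintσg.indicator hWm).integrableOn (hf'i.abs.const_mul c).integrableOn
    have h2 : ∫ ω in E, W.indicator (fun ω => σ ω * g' ω) ω ∂μ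
        = ∫ ω in E, σ ω * g' ω ∂μ :=
      setIntegral_congr_fun hEm fun ω hω => indicator_of_mem (hEW hω) _
    rw [h1, h2, KB E hEm hEW hEv, integral_const_mul, hEv, hcdef]
    field_simp
    ring
  suffices hψ0 : ψ =ᵐ[μ] 0 by
    refine ⟨c, hc0, ?_⟩
    filter_upwards [hψ0, hZae, hff', hgg'] with ω h1 h2 h3 h4
    simp only [Pi.zero_apply] at h1
    by_cases hωW : ω ∈ W
    · have hW1 := hψW ω hωW
      rw [hW1] at h1
      have hσω2 : σ ω * σ ω = 1 := by
        by_cases hcω : f' ω < 0 <;> simp [hσdef, hcω]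
      have hσabs : σ ω * |f' ω| = f' ω := by
        rcases lt_or_ge (f' ω) 0 with hcω | hcω
        · simp [hσdef, hcω, abs_of_neg hcω]
        · simp [hσdef, not_lt.2 hcω, abs_of_nonneg hcω]
      have he : σ ω * g' ω = c * |f' ω| := by linarith
      have hgval : g' ω = c * f' ω := by
        calc g' ω = (σ ω * σ ω) * g' ω := by rw [hσω2, one_mul]
          _ = σ ω * (σ ω * g' ω) := by ring
          _ = σ ω * (c * |f' ω|) := by rw [he]
          _ = c * (σ ω * |f' ω|) := by ring
          _ = c * f' ω := by rw [hσabs]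
      rw [h4, hgval, h3]
    · have hg0 : g' ω = 0 := h2 hωW
      have hf'0 : f' ω = 0 := not_not.1 hωW
      rw [h4, hg0, h3, hf'0, mul_zero]
  by_contra hψne
  set P := {ω | 0 < ψ ω} with hPdef
  set N := {ω | ψ ω < 0} with hNdef
  have hψm : Measurable ψ := ((hσm.mul hg'm).indicator hWm).sub (measurable_const.mul hf'm.abs)
  have hPm : MeasurableSet P := measurableSet_lt measurable_const hψm
  have hNm : MeasurableSet N := measurableSet_lt hψm measurable_const
  have hPW : P ⊆ W := by
    intro ω hω
    have hlt : 0 < ψ ω := hω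
    by_contra hc'
    rw [hψZ ω hc'] at hlt
    exact lt_irrefl _ hlt
  have hNW : N ⊆ W := by
    intro ω hω
    have hlt : ψ ω < 0 := hω
    by_contra hc'
    rw [hψZ ω hc'] at hlt
    exact lt_irrefl _ hlt
  have hμP : μ P ≠ 0 := by
    intro h0
    apply hψne
    have hle : ∀ᵐ ω ∂μ, 0 ≤ -ψ ω := by
      filter_upwards [measure_eq_zero_iff_ae_notMem.1 h0] with ω hω
      exact neg_nonneg.2 (not_lt.1 hω)
    have h2 : ∫ ω, -ψ ω ∂μ = 0 := by rw [integral_neg, hψtot, neg_zero]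
    have h3 := (integral_eq_zero_iff_of_nonneg_ae hle hψi.neg).1 h2
    filter_upwards [h3] with ω hω
    simp only [Pi.zero_apply] at hω ⊢
    linarith [hω]
  have hμN : μ N ≠ 0 := by
    intro h0
    apply hψne
    have hge : ∀ᵐ ω ∂μ, 0 ≤ ψ ω := by
      filter_upwards [measure_eq_zero_iff_ae_notMem.1 h0] with ω hω
      exact not_lt.1 hω
    exact (integral_eq_zero_iff_of_nonneg_ae hge hψi).1 hψtot
  have hβ : 0 < ∫ ω in P, ψ ω ∂μ := aux_pos μ hPm hψi.integrableOn (fun ω hω => hω) hμP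
  by_cases hc1 : M/2 ≤ ∫ ω in P, |f' ω| ∂μ
  · obtain ⟨E, hEm, hEP, hEv⟩ := aux_sier (μ := μ) (F := fun ω => |f' ω|) hf'i.abs
      (fun ω => abs_nonneg _) hPm (r := M/2) (by linarith) hc1
    have h0 := hEψ E hEm (hEP.trans hPW) hEv
    have hμE : μ E ≠ 0 := by
      intro hz
      have : ∫ ω in E, |f' ω| ∂μ = 0 := by
        rw [Measure.restrict_eq_zero.2 hz]
        exact integral_zero_measure _
      rw [this] at hEv
      linarith
    have := aux_pos μ hEm hψi.integrableOn (fun ω hω => hEP hω) hμE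
    linarith
  by_cases hc2 : M/2 ≤ ∫ ω in N, |f' ω| ∂μ
  · obtain ⟨E, hEm, hEN, hEv⟩ := aux_sier (μ := μ) (F := fun ω => |f' ω|) hf'i.abs
      (fun ω => abs_nonneg _) hNm (r := M/2) (by linarith) hc2
    have h0 := hEψ E hEm (hEN.trans hNW) hEv
    have hμE : μ E ≠ 0 := by
      intro hz
      have : ∫ ω in E, |f' ω| ∂μ = 0 := by
        rw [Measure.restrict_eq_zero.2 hz]
        exact integral_zero_measure _
      rw [this] at hEv
      linarith
    have hneg : 0 < ∫ ω in E, -ψ ω ∂μ :=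
      aux_pos μ hEm hψi.neg.integrableOn (fun ω hω => neg_pos.2 (hEN hω)) hμE
    rw [integral_neg] at hneg
    linarith
  push_neg at hc1 hc2
  set R := W \ (P ∪ N) with hRdef
  have hRm : MeasurableSet R := hWm.diff (hPm.union hNm)
  have hPN : Disjoint P N := by
    rw [Set.disjoint_left]
    intro ω h1 h2
    have hlt : ψ ω < 0 := h2
    have hgt : 0 < ψ ω := h1
    linarith
  have hPNW : P ∪ N ⊆ W := union_subset hPW hNW
  have hPNint : ∫ ω in P ∪ N, |f' ω| ∂μ
      = (∫ ω in P, |f' ω| ∂μ) + ∫ ω in N, |f' ω| ∂μ :=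
    setIntegral_union hPN hNm hf'i.abs.integrableOn hf'i.abs.integrableOn
  have hRint := hsplit (fun ω => |f' ω|) hf'i.abs (P ∪ N) (hPm.union hNm) hPNW
  obtain ⟨D₀, hD₀m, hD₀R, hD₀v⟩ := aux_sier (μ := μ) (F := fun ω => |f' ω|) hf'i.abs
    (fun ω => abs_nonneg _) hRm (r := M/2 - ∫ ω in P, |f' ω| ∂μ) (by linarith)
    (by rw [hRdef]; linarith [hRint, hPNint, hWint])
  have hPD₀ : Disjoint P D₀ := by
    rw [Set.disjoint_left]
    intro ω h1 h2
    exact (hD₀R h2).2 (Or.inl h1)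
  have hEm : MeasurableSet (P ∪ D₀) := hPm.union hD₀m
  have hEW : P ∪ D₀ ⊆ W := union_subset hPW (hD₀R.trans diff_subset)
  have hEv : ∫ ω in P ∪ D₀, |f' ω| ∂μ = M/2 := by
    rw [setIntegral_union hPD₀ hD₀m hf'i.abs.integrableOn hf'i.abs.integrableOn, hD₀v]
    ring
  have h0 := hEψ (P ∪ D₀) hEm hEW hEv
  have hD₀ψ : ∫ ω in D₀, ψ ω ∂μ = 0 := by
    have he : EqOn ψ (fun _ => (0:ℝ)) D₀ := by
      intro ω hω
      have h1 := (hD₀R hω).2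
      have h2 : ¬ 0 < ψ ω := fun hcc => h1 (Or.inl hcc)
      have h3 : ¬ ψ ω < 0 := fun hcc => h1 (Or.inr hcc)
      have := not_lt.1 h2
      have := not_lt.1 h3
      show ψ ω = 0
      linarith
    rw [setIntegral_congr_fun hD₀m he, integral_zero]
  have hsum : ∫ ω in P ∪ D₀, ψ ω ∂μ = (∫ ω in P, ψ ω ∂μ) + ∫ ω in D₀, ψ ω ∂μ :=
    setIntegral_union hPD₀ hD₀m hψi.integrableOn hψi.integrableOn
  rw [hsum, hD₀ψ] at h0
  linarith

end
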